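/- arXiv:1701.05515 — 4 statements merged into one kernel-verified Lean document; each statement's English description precedes it below -/
import Mathlib

section
/- Let p > 2, let p₁ satisfy 0 ≤ p₁ < p − 2, and let k₀ > 0, k₂ > 0. Then there exists k₁* > 0 such that for every k₁ with 0 ≤ k₁ ≤ k₁*, the function f(r) = k₀·|r|^(p−2) − k₁·|r|^(p₁) + k₂ with antiderivative F(r) = ∫₀^r f(s) ds satisfies: there exist constants a₀, b₀ > 0 and a₁, b₁ ≥ 0 with |F(r)| ≤ a₀·|r|^(p−1) + a₁·|r| and F(r)·r ≥ b₀·|r|^p + b₁·r² for all r ∈ ℝ. -/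
/-!
Integrating term by term, `F(r) = a·r|r|^(p-2) - d·r|r|^p₁ + k₂·r` with `a = k₀/(p-1)` and
`d = k₁/(p₁+1)`. Since `1 ≤ p₁ + 1 ≤ p - 1`, the middle power `|r|^(p₁+1)` is at most
`|r| + |r|^(p-1)` (compare `|r|` with `1`), and likewise `|r|^(p₁+2) ≤ r² + |r|^p`. Hence the
`k₁`-term is absorbed by the other two as soon as `d < a` and `d ≤ k₂`, which fixes `k₁*`.
-/

open Real intervalIntegral

theorem integral_abs_rpow_of_nonneg {q r : ℝ} (hq : -1 < q) (hr : 0 ≤ r) :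
    ∫ s in (0 : ℝ)..r, |s| ^ q = r * |r| ^ q / (q + 1) := by
  have hq1 : q + 1 ≠ 0 := by linarith
  rw [integral_congr (g := fun s => s ^ q) fun s hs => by
      rw [Set.uIcc_of_le hr] at hs; simp only [abs_of_nonneg hs.1],
    integral_rpow (Or.inl hq), zero_rpow hq1, abs_of_nonneg hr, rpow_add_one' hr hq1]
  ring

theorem integral_abs_rpow {q : ℝ} (hq : -1 < q) (r : ℝ) :
    ∫ s in (0 : ℝ)..r, |s| ^ q = r * |r| ^ q / (q + 1) := by
  rcases le_total 0 r with hr | hr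
  · exact integral_abs_rpow_of_nonneg hq hr
  · have hodd : ∫ s in (0 : ℝ)..r, |s| ^ q = -∫ s in (0 : ℝ)..-r, |s| ^ q := by
      have := integral_comp_neg (a := 0) (b := -r) fun s => |s| ^ q
      simp only [abs_neg, neg_neg, neg_zero] at this
      rw [this, integral_symm r 0]
    rw [hodd, integral_abs_rpow_of_nonneg hq (neg_nonneg.2 hr), abs_neg]
    ring

theorem abs_mul_abs_rpow (r : ℝ) {q : ℝ} (hq : -1 < q) : |r * |r| ^ q| = |r| ^ (q + 1) := by
  rw [abs_mul, abs_of_nonneg (rpow_nonneg (abs_nonneg r) q),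
    rpow_add_one' (abs_nonneg r) (by linarith)]
  ring

theorem mul_abs_rpow_mul_self (r : ℝ) {q : ℝ} (hq : -2 < q) :
    r * |r| ^ q * r = |r| ^ (q + 2) := by
  rw [← Nat.cast_ofNat, rpow_add_natCast' (abs_nonneg r) (by push_cast; linarith), sq_abs]
  ring

theorem rpow_le_rpow_add_rpow {x a b c : ℝ} (hx : 0 ≤ x) (ha : 0 ≤ a) (hab : a ≤ b)
    (hbc : b ≤ c) :
    x ^ b ≤ x ^ a + x ^ c := by
  rcases le_total x 1 with hx1 | hx1
  · linarith [rpow_le_rpow_of_exponent_ge' hx hx1 ha hab, rpow_nonneg hx c]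
  · linarith [rpow_le_rpow_of_exponent_le hx1 hbc, rpow_nonneg hx a]

theorem integral_const_mul_abs_rpow_sub_add {α β : ℝ} (hα : 0 ≤ α) (hβ : 0 ≤ β) (a d k r : ℝ) :
    ∫ s in (0 : ℝ)..r, (a * |s| ^ α - d * |s| ^ β + k) =
      a / (α + 1) * (r * |r| ^ α) - d / (β + 1) * (r * |r| ^ β) + k * r := by
  have hint : ∀ {γ : ℝ}, 0 ≤ γ → ∀ c : ℝ,
      IntervalIntegrable (fun s : ℝ => c * |s| ^ γ) MeasureTheory.volume 0 r := fun hγ c =>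
    ((continuous_abs.rpow_const fun _ => Or.inr hγ).const_mul c).intervalIntegrable _ _
  rw [integral_add ((hint hα a).sub (hint hβ d)) intervalIntegrable_const,
    integral_sub (hint hα a) (hint hβ d),
    integral_const_mul, integral_const_mul, integral_const,
    integral_abs_rpow (by linarith), integral_abs_rpow (by linarith), sub_zero, smul_eq_mul]
  ring

section

variable {a d k α β : ℝ} (r : ℝ)

theorem abs_mul_abs_rpow_sub_add_le (ha : 0 ≤ a) (hd : 0 ≤ d) (hk : 0 ≤ k) (hβ : 0 ≤ β)
    (hβα : β ≤ α) :
    |a * (r * |r| ^ α) - d * (r * |r| ^ β) + k * r| ≤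
      (a + d) * |r| ^ (α + 1) + (k + d) * |r| := by
  have hinterp : |r| ^ (β + 1) ≤ |r| + |r| ^ (α + 1) := by
    simpa only [rpow_one] using
      rpow_le_rpow_add_rpow (abs_nonneg r) zero_le_one (by linarith : (1 : ℝ) ≤ β + 1)
        (by linarith : β + 1 ≤ α + 1)
  calc |a * (r * |r| ^ α) - d * (r * |r| ^ β) + k * r|
      ≤ |a * (r * |r| ^ α)| + |d * (r * |r| ^ β)| + |k * r| := by
        linarith [abs_add_le (a * (r * |r| ^ α) - d * (r * |r| ^ β)) (k * r),
          abs_sub (a * (r * |r| ^ α)) (d * (r * |r| ^ β))]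
    _ = a * |r| ^ (α + 1) + d * |r| ^ (β + 1) + k * |r| := by
      rw [abs_mul a, abs_mul d, abs_mul k, abs_of_nonneg ha, abs_of_nonneg hd, abs_of_nonneg hk,
        abs_mul_abs_rpow r (by linarith), abs_mul_abs_rpow r (by linarith)]
    _ ≤ (a + d) * |r| ^ (α + 1) + (k + d) * |r| := by nlinarith

theorem le_mul_abs_rpow_sub_add_mul_self (hd : 0 ≤ d) (hβ : 0 ≤ β) (hβα : β ≤ α) :
    (a - d) * |r| ^ (α + 2) + (k - d) * r ^ 2 ≤
      (a * (r * |r| ^ α) - d * (r * |r| ^ β) + k * r) * r := by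
  have hinterp : |r| ^ (β + 2) ≤ r ^ 2 + |r| ^ (α + 2) := by
    simpa only [rpow_two, sq_abs] using
      rpow_le_rpow_add_rpow (abs_nonneg r) zero_le_two (by linarith : (2 : ℝ) ≤ β + 2)
        (by linarith : β + 2 ≤ α + 2)
  have hexpand : (a * (r * |r| ^ α) - d * (r * |r| ^ β) + k * r) * r =
      a * |r| ^ (α + 2) - d * |r| ^ (β + 2) + k * r ^ 2 := by
    rw [← mul_abs_rpow_mul_self r (by linarith : -2 < α),
      ← mul_abs_rpow_mul_self r (by linarith : -2 < β)]
    ring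
  rw [hexpand]
  nlinarith

end

/-- For the example nonlinearity `f(r) = k₀|r|^(p-2) - k₁|r|^(p₁) + k₂` with `p > 2`,
`0 ≤ p₁ < p - 2`, `k₀ > 0`, `k₂ > 0`, there is `k₁* > 0` such that for all
`0 ≤ k₁ ≤ k₁*` the antiderivative `F(r) = ∫₀^r f(s) ds` satisfies the growth and
coercivity conditions `|F(r)| ≤ a₀|r|^(p-1) + a₁|r|` and `F(r)·r ≥ b₀|r|^p + b₁r²`. -/
theorem example_nonlinearity_conditions (p p₁ k₀ k₂ : ℝ) (hp : 2 < p)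
    (hp₁ : 0 ≤ p₁) (hp₁' : p₁ < p - 2) (hk₀ : 0 < k₀) (hk₂ : 0 < k₂) :
    ∃ k₁star > (0:ℝ), ∀ k₁ : ℝ, 0 ≤ k₁ → k₁ ≤ k₁star →
      ∃ a₀ > (0:ℝ), ∃ b₀ > (0:ℝ), ∃ a₁ ≥ (0:ℝ), ∃ b₁ ≥ (0:ℝ),
        ∀ r : ℝ,
          |∫ s in (0:ℝ)..r, (k₀ * |s| ^ (p - 2) - k₁ * |s| ^ p₁ + k₂)| ≤
              a₀ * |r| ^ (p - 1) + a₁ * |r| ∧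
          b₀ * |r| ^ p + b₁ * r ^ 2 ≤
              (∫ s in (0:ℝ)..r, (k₀ * |s| ^ (p - 2) - k₁ * |s| ^ p₁ + k₂)) * r := by
  have hp1 : 0 < p - 1 := by linarith
  set m := min (k₀ / (p - 1)) k₂
  have hm : 0 < m := lt_min (by positivity) hk₂
  refine ⟨(p₁ + 1) * m / 2, by positivity, fun k₁ hk₁ hk₁star => ?_⟩
  set d := k₁ / (p₁ + 1)
  have hd : d ≤ m / 2 := by
    rw [div_le_iff₀ (by linarith)]
    linarith
  have hd0 : 0 ≤ d := by positivity
  have hdk₀ : d < k₀ / (p - 1) := by linarith [min_le_left (k₀ / (p - 1)) k₂]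
  have hdk₂ : d ≤ k₂ := by linarith [min_le_right (k₀ / (p - 1)) k₂]
  have hpα : p - 2 + 1 = p - 1 := by ring
  have hpα' : p - 2 + 2 = p := by ring
  refine ⟨k₀ / (p - 1) + d, by positivity, k₀ / (p - 1) - d, by linarith, k₂ + d, by positivity,
    k₂ - d, by linarith, fun r => ?_⟩
  rw [integral_const_mul_abs_rpow_sub_add (by linarith) hp₁, hpα]
  constructor
  · simpa only [hpα] using
      abs_mul_abs_rpow_sub_add_le r (by positivity) hd0 hk₂.le hp₁ hp₁'.le
  · simpa only [hpα'] using le_mul_abs_rpow_sub_add_mul_self r hd0 hp₁ hp₁'.le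
end

section
/- Let T > 0, r > 1, ε > 0, and let y : [0, T] → ℝ be differentiable with y(t) > 0 for all t ∈ [0, T] and y'(t) ≤ y(t) − ε·y(t)^r for all t ∈ [0, T]. Then for every t ∈ [0, T], y(t) ≤ e^t · y(0) · (1 + ε·y(0)^(r−1)·(e^((r−1)·t) − 1))^(−1/(r−1)). -/
/-!
The substitution `z = y ^ (1 - r)` turns the Bernoulli inequality into the linear inequality
`z' ≥ (r - 1) (ε - z)`, so `exp ((r - 1) t) (z t - ε)` is nondecreasing. Comparing its values at `0`
and `t` and solving for `y t` gives the explicit bound, which is the solution of `y' = y - ε y ^ r`.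
-/

open Real Set

theorem monotoneOn_exp_mul_sub_of_mul_sub_le_deriv {s : Set ℝ} (hs : Convex ℝ s) {a c : ℝ}
    {z z' : ℝ → ℝ} (hz : ∀ t ∈ s, HasDerivWithinAt z (z' t) s t)
    (hle : ∀ t ∈ s, a * (c - z t) ≤ z' t) :
    MonotoneOn (fun t => exp (a * t) * (z t - c)) s := by
  have hderiv (t : ℝ) (ht : t ∈ s) : HasDerivWithinAt (fun t => exp (a * t) * (z t - c))
      (exp (a * t) * (z' t - a * (c - z t))) s t := by
    have hexp : HasDerivWithinAt (fun t => exp (a * t)) (exp (a * t) * a) s t := by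
      simpa using (((hasDerivAt_id t).const_mul a).exp).hasDerivWithinAt
    exact (hexp.mul ((hz t ht).sub_const c)).congr_deriv (by ring)
  refine monotoneOn_of_hasDerivWithinAt_nonneg hs
    (fun t ht => (hderiv t ht).continuousWithinAt)
    (fun t ht => (hderiv t (interior_subset ht)).mono interior_subset) fun t ht => ?_
  have := hle t (interior_subset ht)
  have := exp_pos (a * t)
  positivity

theorem sub_one_mul_sub_rpow_one_sub_le {r ε x x' : ℝ} (hr : 1 ≤ r) (hx : 0 < x)
    (h : x' ≤ x - ε * x ^ r) :
    (r - 1) * (ε - x ^ (1 - r)) ≤ x' * (1 - r) * x ^ (1 - r - 1) := by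
  have hmul : x' * x ^ (-r) ≤ x ^ (1 - r) - ε := calc
    x' * x ^ (-r) ≤ (x - ε * x ^ r) * x ^ (-r) := by gcongr
    _ = x ^ (1 - r) - ε := by
      rw [sub_mul, mul_assoc, ← rpow_add hx, add_neg_cancel, rpow_zero, mul_one,
        sub_eq_add_neg 1 r, rpow_add hx, rpow_one]
  rw [show 1 - r - 1 = -r by ring]
  nlinarith

theorem monotoneOn_exp_mul_rpow_one_sub_sub_of_bernoulli {s : Set ℝ} (hs : Convex ℝ s)
    {r ε : ℝ} (hr : 1 ≤ r) {y y' : ℝ → ℝ} (hy : ∀ t ∈ s, HasDerivWithinAt y (y' t) s t)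
    (hpos : ∀ t ∈ s, 0 < y t) (hineq : ∀ t ∈ s, y' t ≤ y t - ε * y t ^ r) :
    MonotoneOn (fun t => exp ((r - 1) * t) * (y t ^ (1 - r) - ε)) s :=
  monotoneOn_exp_mul_sub_of_mul_sub_le_deriv hs
    (fun t ht => (hy t ht).rpow_const (Or.inl (hpos t ht).ne'))
    fun t ht => sub_one_mul_sub_rpow_one_sub_le hr (hpos t ht) (hineq t ht)

theorem le_of_rpow_one_sub_sub_le_exp_mul {r ε t x₀ x : ℝ} (hr : 1 < r) (hε : 0 ≤ ε)
    (ht : 0 ≤ t) (hx₀ : 0 < x₀) (hx : 0 < x)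
    (h : x₀ ^ (1 - r) - ε ≤ exp ((r - 1) * t) * (x ^ (1 - r) - ε)) :
    x ≤ exp t * x₀ * (1 + ε * x₀ ^ (r - 1) * (exp ((r - 1) * t) - 1)) ^ (-(1 / (r - 1))) := by
  set E := exp ((r - 1) * t)
  set B := 1 + ε * x₀ ^ (r - 1) * (E - 1)
  have hE : 1 ≤ E := one_le_exp (mul_nonneg (by linarith) ht)
  have hB : 0 < B := by
    have : 0 ≤ E - 1 := by linarith
    have := rpow_pos_of_pos hx₀ (r - 1)
    positivity
  have hx₀B : x₀ ^ (1 - r) * B = x₀ ^ (1 - r) + ε * (E - 1) := by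
    have : x₀ ^ (1 - r) * x₀ ^ (r - 1) = 1 := by rw [← rpow_add hx₀]; simp
    linear_combination ε * (E - 1) * this
  have key : E⁻¹ * x₀ ^ (1 - r) * B ≤ x ^ (1 - r) := by
    rw [mul_assoc, inv_mul_le_iff₀ (by linarith), hx₀B]
    linarith
  have hr' : 1 - r ≠ 0 := by linarith
  rw [one_div, ← inv_neg, neg_sub]
  calc x = (x ^ (1 - r)) ^ (1 - r)⁻¹ := (rpow_rpow_inv hx.le hr').symm
    _ ≤ (E⁻¹ * x₀ ^ (1 - r) * B) ^ (1 - r)⁻¹ :=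
      rpow_le_rpow_of_nonpos (by positivity) key (inv_nonpos.2 (by linarith))
    _ = exp t * x₀ * B ^ (1 - r)⁻¹ := by
      rw [mul_rpow (by positivity) hB.le, mul_rpow (by positivity) (by positivity),
        rpow_rpow_inv hx₀.le hr', ← exp_neg, ← exp_mul]
      congr 3
      field_simp
      ring

theorem bernoulli_comparison_general (T r ε : ℝ) (hr : 1 < r) (hε : 0 < ε)
    (y y' : ℝ → ℝ)
    (hderiv : ∀ t ∈ Set.Icc 0 T, HasDerivWithinAt y (y' t) (Set.Icc 0 T) t)
    (hpos : ∀ t ∈ Set.Icc 0 T, 0 < y t)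
    (hineq : ∀ t ∈ Set.Icc 0 T, y' t ≤ y t - ε * y t ^ r) :
    ∀ t ∈ Set.Icc 0 T, y t ≤
      Real.exp t * y 0 *
        (1 + ε * y 0 ^ (r - 1) * (Real.exp ((r - 1) * t) - 1)) ^ (-(1 / (r - 1))) := by
  intro t ht
  have h0 : (0 : ℝ) ∈ Icc 0 T := ⟨le_rfl, ht.1.trans ht.2⟩
  have hmono := monotoneOn_exp_mul_rpow_one_sub_sub_of_bernoulli (convex_Icc 0 T) hr.le hderiv
    hpos hineq h0 ht ht.1
  simp only [mul_zero, exp_zero, one_mul] at hmono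
  exact le_of_rpow_one_sub_sub_le_exp_mul hr hε.le ht.1 (hpos 0 h0) (hpos t ht) hmono

/-- Comparison principle for the Bernoulli-type differential inequality
`y' ≤ y - ε·y^r` with `r > 1` on `[0,T]`. -/
theorem bernoulli_comparison (T r ε : ℝ) (hT : 0 < T) (hr : 1 < r) (hε : 0 < ε)
    (y y' : ℝ → ℝ)
    (hderiv : ∀ t ∈ Set.Icc 0 T, HasDerivWithinAt y (y' t) (Set.Icc 0 T) t)
    (hpos : ∀ t ∈ Set.Icc 0 T, 0 < y t)
    (hineq : ∀ t ∈ Set.Icc 0 T, y' t ≤ y t - ε * y t ^ r) :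
    ∀ t ∈ Set.Icc 0 T, y t ≤
      Real.exp t * y 0 *
        (1 + ε * y 0 ^ (r - 1) * (Real.exp ((r - 1) * t) - 1)) ^ (-(1 / (r - 1))) :=
  bernoulli_comparison_general T r ε hr hε y y' hderiv hpos hineq
end

section
/- Let T > 0, c > 0, r > 1 and K ≥ 0. Then there exist constants C > 0 and ε > 0 (depending only on c, r and K) such that every differentiable function y : [0, T] → ℝ with y(t) ≥ 0 for all t ∈ [0, T] and y'(t) ≤ y(t) − c·y(t)^r + K for all t ∈ [0, T] satisfies, for every t ∈ [0, T], y(t) + C ≤ (e^((1−r)·t)·(y(0) + C)^(1−r) + ε·(1 − e^((1−r)·t)))^(1/(1−r)). -/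
/-!
Shifting `y` by `C = K + 1` absorbs the constant `K`: since `(y + C)^r ≤ 2^(r-1) (y^r + C^r)`,
a small `ε` gives `z' ≤ z - ε z^r` for `z = y + C > 0`. This Bernoulli inequality becomes linear
in `w = z^(1-r)`, namely `w' ≥ (1 - r)(w - ε)`, and Grönwall's inequality bounds `w` from below.
Raising that bound to the negative power `1/(1-r)` reverses it and gives the claim.
-/

open Set Real

theorem exists_pos_mul_add_rpow_le_mul_rpow_add_one {c r : ℝ} (hc : 0 < c) (hr : 1 ≤ r)
    {C : ℝ} (hC : 0 ≤ C) : ∃ ε > 0, ∀ y, 0 ≤ y → ε * (y + C) ^ r ≤ c * y ^ r + 1 := by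
  set M : ℝ := 2 ^ (r - 1)
  have hM : 0 < M := by positivity
  have hCr : 0 ≤ C ^ r := by positivity
  refine ⟨min c 1 / (M * (C ^ r + 1)), by positivity, fun y hy => ?_⟩
  have hεM : min c 1 / (M * (C ^ r + 1)) * M = min c 1 / (C ^ r + 1) := by
    field_simp
  have hc' : min c 1 / (C ^ r + 1) ≤ c :=
    div_le_of_le_mul₀ (by positivity) hc.le (by nlinarith [min_le_left c 1])
  have h1 : min c 1 / (C ^ r + 1) * C ^ r ≤ 1 := by
    rw [div_mul_eq_mul_div, div_le_one (by positivity)]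
    nlinarith [min_le_right c 1, min_le_left c 1]
  have hsplit : (y + C) ^ r ≤ M * (y ^ r + C ^ r) := by
    lift y to NNReal using hy
    lift C to NNReal using hC
    exact_mod_cast NNReal.rpow_add_le_mul_rpow_add_rpow y C hr
  calc min c 1 / (M * (C ^ r + 1)) * (y + C) ^ r
      ≤ min c 1 / (M * (C ^ r + 1)) * (M * (y ^ r + C ^ r)) := by gcongr
    _ = min c 1 / (C ^ r + 1) * y ^ r + min c 1 / (C ^ r + 1) * C ^ r := by
        rw [← hεM]; ring
    _ ≤ c * y ^ r + 1 := by gcongr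

theorem exp_mul_add_mul_one_sub_exp_le_of_deriv_ge {w w' : ℝ → ℝ} {s ε T : ℝ}
    (hw : ContinuousOn w (Icc 0 T))
    (hw' : ∀ t ∈ Ico 0 T, HasDerivWithinAt w (w' t) (Ici t) t)
    (bound : ∀ t ∈ Ico 0 T, s * (w t - ε) ≤ w' t) :
    ∀ t ∈ Icc 0 T, exp (s * t) * w 0 + ε * (1 - exp (s * t)) ≤ w t := by
  intro t ht
  have hgronwall := le_gronwallBound_of_liminf_deriv_right_le (δ := -w 0) (K := s) (ε := s * ε)
    hw.neg (fun x hx _ hr => (hw' x hx).neg.liminf_right_slope_le hr) le_rfl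
    (fun x hx => by simp only [Pi.neg_apply]; linarith [bound x hx]) t ht
  have hbound :
      gronwallBound (-w 0) s (s * ε) t = -(exp (s * t) * w 0 + ε * (1 - exp (s * t))) := by
    rcases eq_or_ne s 0 with rfl | hs
    · simp [gronwallBound_K0]
    · rw [gronwallBound_of_K_ne_0 hs]; field_simp; ring
  rw [sub_zero, hbound] at hgronwall
  exact neg_le_neg_iff.mp hgronwall

theorem one_sub_mul_rpow_sub_le_of_le_sub_mul_rpow {z d r ε : ℝ} (hz : 0 < z) (hr : 1 ≤ r)
    (h : d ≤ z - ε * z ^ r) :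
    (1 - r) * (z ^ (1 - r) - ε) ≤ d * (1 - r) * z ^ (1 - r - 1) := by
  have hexp : z ^ (1 - r) - ε = (z - ε * z ^ r) * z ^ (1 - r - 1) := by
    have hsplit : z ^ (1 - r) = z ^ (1 - r - 1) * z := by
      rw [← rpow_add_one hz.ne']; ring_nf
    rw [sub_mul, mul_assoc, ← rpow_add hz, hsplit]
    norm_num [mul_comm]
  rw [hexp, mul_comm d, mul_assoc]
  exact mul_le_mul_of_nonpos_left (by gcongr) (by linarith)

theorem le_rpow_one_div_one_sub_of_deriv_le {z z' : ℝ → ℝ} {T r ε : ℝ} (hr : 1 < r) (hε : 0 ≤ ε)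
    (hz : ∀ t ∈ Icc 0 T, 0 < z t)
    (hz' : ∀ t ∈ Icc 0 T, HasDerivWithinAt z (z' t) (Icc 0 T) t)
    (hle : ∀ t ∈ Icc 0 T, z' t ≤ z t - ε * z t ^ r) :
    ∀ t ∈ Icc 0 T, z t ≤
      (exp ((1 - r) * t) * z 0 ^ (1 - r) + ε * (1 - exp ((1 - r) * t))) ^ (1 / (1 - r)) := by
  intro t ht
  have hw' : ∀ x ∈ Ico 0 T, HasDerivWithinAt (fun x => z x ^ (1 - r))
      (z' x * (1 - r) * z x ^ (1 - r - 1)) (Ici x) x := fun x hx =>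
    ((hz' x (Ico_subset_Icc_self hx)).mono_of_mem_nhdsWithin
      (Filter.mem_of_superset (Icc_mem_nhdsGE hx.2) (Icc_subset_Icc_left hx.1))).rpow_const
      (.inl (hz x (Ico_subset_Icc_self hx)).ne')
  have hw : ContinuousOn (fun x => z x ^ (1 - r)) (Icc 0 T) := fun x hx =>
    (hz' x hx).continuousWithinAt.rpow_const (.inl (hz x hx).ne')
  have hlower := exp_mul_add_mul_one_sub_exp_le_of_deriv_ge hw hw' (fun x hx =>
    one_sub_mul_rpow_sub_le_of_le_sub_mul_rpow (hz x (Ico_subset_Icc_self hx)) hr.le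
      (hle x (Ico_subset_Icc_self hx))) t ht
  have hexp : exp ((1 - r) * t) ≤ 1 := exp_le_one_iff.mpr (by nlinarith [ht.1])
  have hpos : 0 < exp ((1 - r) * t) * z 0 ^ (1 - r) + ε * (1 - exp ((1 - r) * t)) := by
    have hz0 := hz 0 ⟨le_rfl, ht.1.trans ht.2⟩
    exact add_pos_of_pos_of_nonneg (by positivity) (mul_nonneg hε (by linarith))
  rw [one_div, le_rpow_inv_iff_of_neg (hz t ht) hpos (by linarith)]
  exact hlower

theorem behaviour_lemma_core_general (T c r K : ℝ) (hc : 0 < c) (hr : 1 < r)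
    (hK : 0 ≤ K) :
    ∃ C > (0:ℝ), ∃ ε > (0:ℝ), ∀ y y' : ℝ → ℝ,
      (∀ t ∈ Set.Icc 0 T, 0 ≤ y t) →
      (∀ t ∈ Set.Icc 0 T, HasDerivWithinAt y (y' t) (Set.Icc 0 T) t) →
      (∀ t ∈ Set.Icc 0 T, y' t ≤ y t - c * y t ^ r + K) →
      ∀ t ∈ Set.Icc 0 T, y t + C ≤
        (Real.exp ((1 - r) * t) * (y 0 + C) ^ (1 - r) +
          ε * (1 - Real.exp ((1 - r) * t))) ^ (1 / (1 - r)) := by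
  obtain ⟨ε, hε, habsorb⟩ :=
    exists_pos_mul_add_rpow_le_mul_rpow_add_one hc hr.le (by linarith : (0:ℝ) ≤ K + 1)
  refine ⟨K + 1, by linarith, ε, hε, fun y y' hy hy' hle => ?_⟩
  refine le_rpow_one_div_one_sub_of_deriv_le (z := fun t => y t + (K + 1)) hr hε.le
    (fun t ht => by linarith [hy t ht]) (fun t ht => (hy' t ht).add_const _) fun t ht => ?_
  linarith [hle t ht, habsorb (y t) (hy t ht)]

/-- Analytic core of the behaviour Lemma: for `c > 0`, `r > 1`, `K ≥ 0` there are
`C > 0`, `ε > 0` such that any nonnegative differentiable `y` on `[0,T]` with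
`y' ≤ y - c·y^r + K` satisfies
`y(t) + C ≤ (e^((1-r)t)·(y(0) + C)^(1-r) + ε(1 - e^((1-r)t)))^(1/(1-r))`. -/
theorem behaviour_lemma_core (T c r K : ℝ) (hT : 0 < T) (hc : 0 < c) (hr : 1 < r)
    (hK : 0 ≤ K) :
    ∃ C > (0:ℝ), ∃ ε > (0:ℝ), ∀ y y' : ℝ → ℝ,
      (∀ t ∈ Set.Icc 0 T, 0 ≤ y t) →
      (∀ t ∈ Set.Icc 0 T, HasDerivWithinAt y (y' t) (Set.Icc 0 T) t) →
      (∀ t ∈ Set.Icc 0 T, y' t ≤ y t - c * y t ^ r + K) →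
      ∀ t ∈ Set.Icc 0 T, y t + C ≤
        (Real.exp ((1 - r) * t) * (y 0 + C) ^ (1 - r) +
          ε * (1 - Real.exp ((1 - r) * t))) ^ (1 / (1 - r)) :=
  behaviour_lemma_core_general T c r K hc hr hK
end

section
/- Let (Ω, μ) be a finite measure space, let p > 2 with conjugate exponent q = p/(p−1), and let F : ℝ → ℝ be continuous, monotone nondecreasing, and satisfy |F(ρ)| ≤ a₀·|ρ|^(p−1) + a₁·|ρ| for all ρ ∈ ℝ, where a₀ > 0 and a₁ ≥ 0. Let u ∈ L^p(μ) and η ∈ L^q(μ), and suppose that for every bounded measurable function w : Ω → ℝ we have ∫_Ω (η(x) − F(w(x)))·(u(x) − w(x)) dμ(x) ≥ 0. Then η(x) = F(u(x)) for μ-almost every x ∈ Ω. -/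
/-!
Minty's trick. Truncating an `L^p` test function `w` and passing to the limit by dominated
convergence (the growth bound puts `F ∘ w` in `L^q`, so Hölder supplies the dominating function)
extends the inequality to all measurable `w ∈ L^p`. Testing with `w = u + ε v` for bounded `v`
and dividing by `-ε` gives `∫ (η - F (u + ε v)) v ≤ 0`; letting `ε → 0` with continuity of `F`
yields `∫ (η - F u) v ≤ 0` for every bounded `v`, in particular for `± 1_s`, so `η - F u` has
zero integral over every measurable set.
-/

open MeasureTheory Filter Topology

def truncation (k : ℕ) (r : ℝ) : ℝ := max (-(k : ℝ)) (min (k : ℝ) r)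

lemma abs_truncation_le_abs (k : ℕ) (r : ℝ) : |truncation k r| ≤ |r| := by
  unfold truncation
  rw [abs_le]
  constructor <;> cases abs_cases r <;> cases max_cases (-(k : ℝ)) (min k r) <;>
    cases min_cases (k : ℝ) r <;> linarith [(k.cast_nonneg : (0 : ℝ) ≤ k)]

lemma abs_truncation_le (k : ℕ) (r : ℝ) : |truncation k r| ≤ k :=
  abs_le.2 ⟨le_max_left _ _,
    max_le (by linarith [(k.cast_nonneg : (0 : ℝ) ≤ k)]) (min_le_left _ _)⟩

lemma continuous_truncation (k : ℕ) : Continuous (truncation k) := by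
  unfold truncation; fun_prop

lemma tendsto_truncation_atTop (r : ℝ) : Tendsto (truncation · r) atTop (𝓝 r) := by
  refine tendsto_const_nhds.congr' ((eventually_ge_atTop ⌈|r|⌉₊).mono fun k hk => ?_)
  have hr : |r| ≤ k := (Nat.le_ceil |r|).trans (Nat.cast_le.2 hk)
  simp only [truncation, min_eq_right (le_of_abs_le hr), max_eq_right (neg_le_of_abs_le hr)]

noncomputable def growthEnvelope (a₀ a₁ p s : ℝ) : ℝ := a₀ * s ^ (p - 1) + a₁ * s

section GrowthEnvelope

variable {a₀ a₁ p : ℝ}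

lemma growthEnvelope_nonneg (ha₀ : 0 ≤ a₀) (ha₁ : 0 ≤ a₁) {s : ℝ} (hs : 0 ≤ s) :
    0 ≤ growthEnvelope a₀ a₁ p s := by
  have := Real.rpow_nonneg hs (p - 1)
  unfold growthEnvelope
  positivity

lemma growthEnvelope_monotoneOn (ha₀ : 0 ≤ a₀) (ha₁ : 0 ≤ a₁) (hp : 1 ≤ p) :
    MonotoneOn (growthEnvelope a₀ a₁ p) (Set.Ici 0) := by
  intro s hs t _ hst
  unfold growthEnvelope
  gcongr

lemma abs_le_growthEnvelope {F : ℝ → ℝ} (ha₀ : 0 ≤ a₀) (ha₁ : 0 ≤ a₁) (hp : 1 ≤ p)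
    (hF : ∀ ρ, |F ρ| ≤ growthEnvelope a₀ a₁ p |ρ|) {r s : ℝ} (hrs : |r| ≤ s) :
    |F r| ≤ growthEnvelope a₀ a₁ p s :=
  (hF r).trans <| growthEnvelope_monotoneOn ha₀ ha₁ hp (abs_nonneg r)
    ((abs_nonneg r).trans hrs) hrs

end GrowthEnvelope

section AeEqZero

variable {Ω : Type*} [MeasurableSpace Ω] {μ : Measure Ω}

theorem ae_eq_zero_of_forall_integral_mul_nonpos {f : Ω → ℝ} (hf : Integrable f μ)
    (h : ∀ v : Ω → ℝ, Measurable v → (∀ x, |v x| ≤ 1) → ∫ x, f x * v x ∂μ ≤ 0) :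
    f =ᵐ[μ] 0 := by
  refine hf.ae_eq_zero_of_forall_setIntegral_eq_zero fun s hs _ => ?_
  have hc : ∀ c : ℝ, |c| ≤ 1 → (∫ x in s, f x ∂μ) * c ≤ 0 := by
    intro c hc
    have := h (s.indicator fun _ => c) (measurable_const.indicator hs)
      (fun x => by by_cases hx : x ∈ s <;> simp [hx, hc])
    simp_rw [← Set.indicator_mul_right] at this
    rwa [integral_indicator hs, integral_mul_const] at this
  linarith [hc 1 (by simp), hc (-1) (by simp)]

end AeEqZero

section Minty

variable {Ω : Type*} [MeasurableSpace Ω] {μ : Measure Ω} [IsFiniteMeasure μ]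
  {p q a₀ a₁ : ℝ} {F : ℝ → ℝ} {η u : Ω → ℝ}

lemma MeasureTheory.MemLp.growthEnvelope_abs (hpq : p.HolderConjugate q) (hp : 2 ≤ p)
    {h : Ω → ℝ} (hh : MemLp h (ENNReal.ofReal p) μ) (a₀ a₁ : ℝ) :
    MemLp (fun x => growthEnvelope a₀ a₁ p |h x|) (ENNReal.ofReal q) μ := by
  have hq : ENNReal.ofReal p / ENNReal.ofReal (p - 1) = ENNReal.ofReal q := by
    rw [hpq.conjugate_eq, ENNReal.ofReal_div_of_pos hpq.sub_one_pos]
  have hqp : q ≤ p := by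
    rw [hpq.conjugate_eq, div_le_iff₀ hpq.sub_one_pos]
    nlinarith
  have hpow : MemLp (fun x => |h x| ^ (p - 1)) (ENNReal.ofReal q) μ := by
    simpa [hq, ENNReal.toReal_ofReal hpq.sub_one_pos.le] using
      hh.norm_rpow_div (ENNReal.ofReal (p - 1))
  have habs : MemLp (fun x => |h x|) (ENNReal.ofReal q) μ := by
    simpa using hh.norm.mono_exponent (ENNReal.ofReal_le_ofReal hqp)
  exact (hpow.const_mul a₀).add (habs.const_mul a₁)

lemma MeasureTheory.MemLp.comp_of_abs_le_growthEnvelope (hpq : p.HolderConjugate q)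
    (hp : 2 ≤ p) (ha₀ : 0 ≤ a₀) (ha₁ : 0 ≤ a₁) (hFc : Continuous F)
    (hF : ∀ ρ, |F ρ| ≤ growthEnvelope a₀ a₁ p |ρ|) {g : Ω → ℝ}
    (hg : MemLp g (ENNReal.ofReal p) μ) :
    MemLp (fun x => F (g x)) (ENNReal.ofReal q) μ := by
  refine (hg.growthEnvelope_abs hpq hp a₀ a₁).of_le (hFc.comp_aestronglyMeasurable hg.1)
    (ae_of_all _ fun x => ?_)
  rw [Real.norm_eq_abs, Real.norm_eq_abs,
    abs_of_nonneg (growthEnvelope_nonneg ha₀ ha₁ (abs_nonneg _))]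
  exact hF _

theorem tendsto_integral_sub_comp_mul (hpq : p.HolderConjugate q) (hp : 2 ≤ p)
    (ha₀ : 0 ≤ a₀) (ha₁ : 0 ≤ a₁) (hFc : Continuous F)
    (hF : ∀ ρ, |F ρ| ≤ growthEnvelope a₀ a₁ p |ρ|) (hη : MemLp η (ENNReal.ofReal q) μ)
    {g k : ℕ → Ω → ℝ} {g₀ k₀ G K : Ω → ℝ}
    (hG : MemLp G (ENNReal.ofReal p) μ) (hK : MemLp K (ENNReal.ofReal p) μ)
    (hg_meas : ∀ n, AEStronglyMeasurable (g n) μ) (hk_meas : ∀ n, AEStronglyMeasurable (k n) μ)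
    (hgG : ∀ n x, |g n x| ≤ G x) (hkK : ∀ n x, |k n x| ≤ K x)
    (hg : ∀ x, Tendsto (g · x) atTop (𝓝 (g₀ x))) (hk : ∀ x, Tendsto (k · x) atTop (𝓝 (k₀ x))) :
    Tendsto (fun n => ∫ x, (η x - F (g n x)) * k n x ∂μ) atTop
      (𝓝 (∫ x, (η x - F (g₀ x)) * k₀ x ∂μ)) := by
  have := hpq.symm.ennrealOfReal
  set bound : Ω → ℝ := fun x => (|η x| + growthEnvelope a₀ a₁ p |G x|) * |K x|
  have hbound : Integrable bound μ := by
    have hηG : MemLp (fun x => |η x| + growthEnvelope a₀ a₁ p |G x|) (ENNReal.ofReal q) μ :=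
      hη.norm.add (hG.growthEnvelope_abs hpq hp a₀ a₁)
    exact hηG.integrable_mul hK.norm
  refine tendsto_integral_of_dominated_convergence bound
    (fun n => (hη.1.sub (hFc.comp_aestronglyMeasurable (hg_meas n))).mul (hk_meas n)) hbound
    (fun n => ae_of_all _ fun x => ?_)
    (ae_of_all _ fun x => ((tendsto_const_nhds.sub ?_).mul (hk x)))
  · rw [Real.norm_eq_abs, abs_mul]
    refine mul_le_mul ((abs_sub _ _).trans (add_le_add le_rfl ?_))
      ((hkK n x).trans (le_abs_self _)) (abs_nonneg _)
      (add_nonneg (abs_nonneg _) (growthEnvelope_nonneg ha₀ ha₁ (abs_nonneg _)))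
    exact abs_le_growthEnvelope ha₀ ha₁ hpq.lt.le hF ((hgG n x).trans (le_abs_self _))
  · exact (hFc.tendsto _).comp (hg x)

theorem integral_sub_comp_mul_sub_nonneg_of_memLp (hpq : p.HolderConjugate q) (hp : 2 ≤ p)
    (ha₀ : 0 ≤ a₀) (ha₁ : 0 ≤ a₁) (hFc : Continuous F)
    (hF : ∀ ρ, |F ρ| ≤ growthEnvelope a₀ a₁ p |ρ|)
    (hu : MemLp u (ENNReal.ofReal p) μ) (hη : MemLp η (ENNReal.ofReal q) μ)
    (hminty : ∀ w : Ω → ℝ, Measurable w → (∃ M : ℝ, ∀ x, |w x| ≤ M) →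
      0 ≤ ∫ x, (η x - F (w x)) * (u x - w x) ∂μ)
    (w : Ω → ℝ) (hw : Measurable w) (hwp : MemLp w (ENNReal.ofReal p) μ) :
    0 ≤ ∫ x, (η x - F (w x)) * (u x - w x) ∂μ := by
  have hT : ∀ n, Measurable fun x => truncation n (w x) := fun n =>
    (continuous_truncation n).measurable.comp hw
  refine ge_of_tendsto' (tendsto_integral_sub_comp_mul hpq hp ha₀ ha₁ hFc hF hη
    (G := fun x => |w x|) (K := fun x => |u x| + |w x|) hwp.norm (hu.norm.add hwp.norm)
    (fun n => (hT n).aestronglyMeasurable) (fun n => hu.1.sub (hT n).aestronglyMeasurable)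
    (fun n x => abs_truncation_le_abs n (w x))
    (fun n x => (abs_sub _ _).trans (add_le_add le_rfl (abs_truncation_le_abs n (w x))))
    (fun x => tendsto_truncation_atTop (w x))
    (fun x => tendsto_const_nhds.sub (tendsto_truncation_atTop (w x))))
    fun n => hminty _ (hT n) ⟨n, fun x => abs_truncation_le n (w x)⟩

theorem integral_sub_comp_mul_nonpos (hpq : p.HolderConjugate q) (hp : 2 ≤ p)
    (ha₀ : 0 ≤ a₀) (ha₁ : 0 ≤ a₁) (hFc : Continuous F)
    (hF : ∀ ρ, |F ρ| ≤ growthEnvelope a₀ a₁ p |ρ|)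
    (hu : Measurable u) (hup : MemLp u (ENNReal.ofReal p) μ) (hη : MemLp η (ENNReal.ofReal q) μ)
    (hext : ∀ w : Ω → ℝ, Measurable w → MemLp w (ENNReal.ofReal p) μ →
      0 ≤ ∫ x, (η x - F (w x)) * (u x - w x) ∂μ)
    {v : Ω → ℝ} (hv : Measurable v) {M : ℝ} (hvM : ∀ x, |v x| ≤ M) :
    ∫ x, (η x - F (u x)) * v x ∂μ ≤ 0 := by
  set ε : ℕ → ℝ := fun n => 1 / ((n : ℝ) + 1)
  have hε : ∀ n, 0 < ε n := fun n => Nat.one_div_pos_of_nat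
  have hε1 : ∀ n, ε n ≤ 1 := fun n => by
    simp only [ε]; rw [div_le_one (by positivity)]; simp
  have hvp : MemLp v (ENNReal.ofReal p) μ :=
    .of_bound hv.aestronglyMeasurable M (ae_of_all _ hvM)
  have hstep : ∀ n, ∫ x, (η x - F (u x + ε n * v x)) * v x ∂μ ≤ 0 := by
    intro n
    have h : 0 ≤ ∫ x, (η x - F (u x + ε n * v x)) * (u x - (u x + ε n * v x)) ∂μ :=
      hext _ (hu.add (hv.const_mul (ε n))) (hup.add (hvp.const_mul (ε n)))
    have hsub : ∫ x, (η x - F (u x + ε n * v x)) * (u x - (u x + ε n * v x)) ∂μ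
        = -ε n * ∫ x, (η x - F (u x + ε n * v x)) * v x ∂μ := by
      rw [← integral_const_mul]; congr 1 with x; ring
    nlinarith [hε n]
  refine le_of_tendsto' (tendsto_integral_sub_comp_mul hpq hp ha₀ ha₁ hFc hF hη
    (G := fun x => |u x| + M) (K := fun _ => M) (hup.norm.add (memLp_const M)) (memLp_const M)
    (fun n => (hu.add (hv.const_mul (ε n))).aestronglyMeasurable)
    (fun _ => hv.aestronglyMeasurable)
    (fun n x => ?_) (fun _ => hvM) (fun x => ?_) (fun _ => tendsto_const_nhds)) hstep
  · calc |u x + ε n * v x| ≤ |u x| + |ε n * v x| := abs_add_le _ _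
      _ ≤ |u x| + M := by
        rw [abs_mul, abs_of_pos (hε n)]
        exact add_le_add le_rfl ((mul_le_of_le_one_left (abs_nonneg _) (hε1 n)).trans (hvM x))
  · simpa [ε, one_div] using
      (tendsto_one_div_add_atTop_nhds_zero_nat.mul_const (v x)).const_add (u x)

end Minty

theorem minty_identification_general {Ω : Type*} [MeasurableSpace Ω] (μ : Measure Ω)
    [IsFiniteMeasure μ]
    (p q a₀ a₁ : ℝ) (hp : 2 < p) (hq : q = p / (p - 1)) (ha₀ : 0 < a₀) (ha₁ : 0 ≤ a₁)
    (F : ℝ → ℝ) (hFc : Continuous F)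
    (hFg : ∀ ρ : ℝ, |F ρ| ≤ a₀ * |ρ| ^ (p - 1) + a₁ * |ρ|)
    (u η : Ω → ℝ)
    (hu : MemLp u (ENNReal.ofReal p) μ)
    (hη : MemLp η (ENNReal.ofReal q) μ)
    (hminty : ∀ w : Ω → ℝ, Measurable w → (∃ M : ℝ, ∀ x, |w x| ≤ M) →
      0 ≤ ∫ x, (η x - F (w x)) * (u x - w x) ∂μ) :
    ∀ᵐ x ∂μ, η x = F (u x) := by
  have hpq : p.HolderConjugate q := (Real.holderConjugate_iff_eq_conjExponent (by linarith)).2 hq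
  obtain ⟨u', hu'm, huu'⟩ := hu.1.aemeasurable
  have hu' : MemLp u' (ENNReal.ofReal p) μ := hu.ae_eq huu'
  have hminty' : ∀ w : Ω → ℝ, Measurable w → (∃ M : ℝ, ∀ x, |w x| ≤ M) →
      0 ≤ ∫ x, (η x - F (w x)) * (u' x - w x) ∂μ := fun w hw hwM =>
    (hminty w hw hwM).trans_eq (integral_congr_ae (huu'.mono fun x hx => by simp only [hx]))
  have hext := integral_sub_comp_mul_sub_nonneg_of_memLp hpq hp.le ha₀.le ha₁ hFc hFg hu' hη
    hminty'
  have hq1 : 1 ≤ ENNReal.ofReal q := ENNReal.one_le_ofReal.2 hpq.symm.lt.le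
  have hdiff : (fun x => η x - F (u' x)) =ᵐ[μ] 0 :=
    ae_eq_zero_of_forall_integral_mul_nonpos
      ((hη.integrable hq1).sub
        ((hu'.comp_of_abs_le_growthEnvelope hpq hp.le ha₀.le ha₁ hFc hFg).integrable hq1))
      fun v hv hv1 => integral_sub_comp_mul_nonpos hpq hp.le ha₀.le ha₁ hFc hFg hu'm hu' hη hext
        hv hv1
  filter_upwards [hdiff, huu'] with x hx hux
  rw [hux]
  exact sub_eq_zero.1 hx

/-- Minty-type identification: on a finite measure space, if `F` is continuous, monotone
nondecreasing with growth `|F(ρ)| ≤ a₀|ρ|^(p-1) + a₁|ρ|`, `u ∈ L^p`, `η ∈ L^q`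
(`q = p/(p-1)`), and `∫ (η - F(w))·(u - w) dμ ≥ 0` for every bounded measurable `w`,
then `η = F(u)` almost everywhere. -/
theorem minty_identification {Ω : Type*} [MeasurableSpace Ω] (μ : Measure Ω)
    [IsFiniteMeasure μ]
    (p q a₀ a₁ : ℝ) (hp : 2 < p) (hq : q = p / (p - 1)) (ha₀ : 0 < a₀) (ha₁ : 0 ≤ a₁)
    (F : ℝ → ℝ) (hFc : Continuous F) (hFm : Monotone F)
    (hFg : ∀ ρ : ℝ, |F ρ| ≤ a₀ * |ρ| ^ (p - 1) + a₁ * |ρ|)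
    (u η : Ω → ℝ)
    (hu : MemLp u (ENNReal.ofReal p) μ)
    (hη : MemLp η (ENNReal.ofReal q) μ)
    (hminty : ∀ w : Ω → ℝ, Measurable w → (∃ M : ℝ, ∀ x, |w x| ≤ M) →
      0 ≤ ∫ x, (η x - F (w x)) * (u x - w x) ∂μ) :
    ∀ᵐ x ∂μ, η x = F (u x) :=
  minty_identification_general μ p q a₀ a₁ hp hq ha₀ ha₁ F hFc hFg u η hu hη hminty
end
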